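/- Uniqueness via an energy argument on the strip: let g(Ω) ∈ (0,1), s ∈ (0,1), and p(r) = (1/(2π)) exp(-[Φ^{-1}(r)]^2). Suppose Z : [0, g(Ω)] × [0,∞) → R is smooth enough, satisfies -z^{2-1/s} ∂²Z/∂z² - p(r) ∂²Z/∂r² ≤ 0 a.e. on (0,g(Ω))×(0,∞), with boundary conditions Z(0,z) = 0, ∂Z/∂r(g(Ω), z) = 0 for all z ≥ 0, ∂Z/∂z(r,0) ≥ 0 for r ∈ (0,g(Ω)), and Z(r,z) → 0 as z → ∞ uniformly in r. Then Z ≤ 0 on [0,g(Ω)] × [0,∞). -/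

import Mathlib

/-!
A maximum-principle argument. If `Z` took a value `M > 0`, choose `z₁` with `Z ≤ M / 2` on
`z = z₁` and a small `ε > 0`; then `W = Z + ε ((r - 2g)² + (z + 1)²)` attains its maximum over
`[0, g] × [0, z₁]` in the interior. Indeed `W < M` on `r = 0` and on `z = z₁`, and since the
vertex `(2g, -1)` of the paraboloid lies beyond `r = g` and below `z = 0`, the conditions
`Z_r(g, ·) = 0` and `Z_z(·, 0) ≥ 0` make `W` strictly increase into the rectangle on those edges.
At an interior maximum `Z_rr, Z_zz ≤ -2ε`, so both are negative on a neighbourhood, where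
`-z^{2-1/s} Z_zz - p Z_rr > 0` because `p ≥ 0` (`Φ` maps `ℝ` onto `(0, 1)`): this contradicts the
subsolution inequality, which holds almost everywhere on that neighbourhood.
-/

open MeasureTheory Real ENNReal

/-- The Gaussian complementary distribution function
`Φ(λ) = (2π)^{-1/2} ∫_λ^∞ e^{-r²/2} dr`. -/
noncomputable def gaussPhi (lam : ℝ) : ℝ :=
  (1 / Real.sqrt (2 * π)) * ∫ r in Set.Ioi lam, Real.exp (-r ^ 2 / 2)

open Set Filter Topology Function

theorem exp_neg_sq_div_two_eq_exp_neg_mul_sq :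
    (fun r : ℝ => exp (-r ^ 2 / 2)) = fun r => exp (-(1 / 2) * r ^ 2) := by
  funext r; ring_nf

theorem integrable_exp_neg_sq_div_two : Integrable fun r : ℝ => exp (-r ^ 2 / 2) := by
  rw [exp_neg_sq_div_two_eq_exp_neg_mul_sq]; exact integrable_exp_neg_mul_sq (by norm_num)

theorem integral_exp_neg_sq_div_two : ∫ r : ℝ, exp (-r ^ 2 / 2) = √(2 * π) := by
  rw [exp_neg_sq_div_two_eq_exp_neg_mul_sq, integral_gaussian]; congr 1; ring

theorem continuous_gaussPhi : Continuous gaussPhi := by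
  have hT : ∀ a, ∫ r in Ioi a, exp (-r ^ 2 / 2)
      = (∫ r in Ioi 0, exp (-r ^ 2 / 2)) - ∫ r in (0 : ℝ)..a, exp (-r ^ 2 / 2) := fun a => by
    rw [eq_sub_iff_add_eq', intervalIntegral.integral_interval_add_Ioi
      integrable_exp_neg_sq_div_two.integrableOn integrable_exp_neg_sq_div_two.integrableOn]
  rw [show gaussPhi = _ from funext fun a => by rw [gaussPhi, hT]]
  exact continuous_const.mul (continuous_const.sub
    (integrable_exp_neg_sq_div_two.continuous_primitive 0))

theorem tendsto_gaussPhi_atTop : Tendsto gaussPhi atTop (𝓝 0) := by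
  have := (tendsto_integral_Ioi_zero (f := fun r => exp (-r ^ 2 / 2)) (μ := volume)
    tendsto_id).const_mul (1 / √(2 * π))
  rw [mul_zero] at this
  exact this.congr fun _ => rfl

theorem tendsto_gaussPhi_atBot : Tendsto gaussPhi atBot (𝓝 1) := by
  have hT : ∀ a, ∫ r in Ioi a, exp (-r ^ 2 / 2)
      = √(2 * π) - ∫ r in Iic a, exp (-r ^ 2 / 2) := fun a => by
    rw [eq_sub_iff_add_eq', intervalIntegral.integral_Iic_add_Ioi
      integrable_exp_neg_sq_div_two.integrableOn integrable_exp_neg_sq_div_two.integrableOn,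
      integral_exp_neg_sq_div_two]
  have := ((tendsto_integral_Iic_zero (f := fun r => exp (-r ^ 2 / 2)) (μ := volume)
    tendsto_id).const_sub (√(2 * π))).const_mul (1 / √(2 * π))
  rw [sub_zero, one_div_mul_cancel (by positivity)] at this
  exact this.congr fun a => by rw [gaussPhi, hT]; rfl

theorem Ioo_subset_range_gaussPhi : Ioo 0 1 ⊆ range gaussPhi := fun _ hr =>
  mem_range_of_exists_le_of_exists_ge continuous_gaussPhi
    ((tendsto_gaussPhi_atTop.eventually (eventually_le_nhds hr.1)).exists)
    ((tendsto_gaussPhi_atBot.eventually (eventually_ge_nhds hr.2)).exists)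

theorem IsLocalMax.deriv_deriv_nonpos {f : ℝ → ℝ} {x : ℝ} (h : IsLocalMax f x)
    (hc : ContinuousAt f x) : deriv (deriv f) x ≤ 0 := by
  by_contra! hpos
  have hmin : IsLocalMin f x := isLocalMin_of_deriv_deriv_pos hpos h.deriv_eq_zero hc
  have hconst : f =ᶠ[𝓝 x] fun _ => f x := by
    filter_upwards [h, hmin] with y hy₁ hy₂ using le_antisymm hy₁ hy₂
  have : deriv (deriv f) x = 0 := by
    rw [hconst.deriv.deriv_eq]; simp
  linarith

theorem IsMaxOn.hasDerivAt_mul_sub_nonpos {f : ℝ → ℝ} {s : Set ℝ} {x y f' : ℝ}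
    (h : IsMaxOn f s x) (hs : Convex ℝ s) (hx : x ∈ s) (hy : y ∈ s)
    (hf : HasDerivAt f f' x) : (y - x) * f' ≤ 0 := by
  simpa [mul_comm] using (h.localize.on_subset subset_rfl : IsLocalMaxOn f s x)
    |>.hasFDerivWithinAt_nonpos hf.hasFDerivAt.hasFDerivWithinAt
      (sub_mem_posTangentConeAt_of_segment_subset (hs.segment_subset hx hy))

theorem exists_mem_of_ae_restrict {X : Type*} [TopologicalSpace X] [MeasurableSpace X]
    [OpensMeasurableSpace X] {μ : Measure X} [μ.IsOpenPosMeasure] {s V : Set X} {p : X → Prop}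
    (hp : ∀ᵐ x ∂μ.restrict s, p x) (hV : IsOpen V) (hVne : V.Nonempty) (hVs : V ⊆ s) :
    ∃ x ∈ V, p x := by
  have : (ae (μ.restrict V)).NeBot := ae_restrict_neBot.2 (hV.measure_ne_zero μ hVne)
  exact ((ae_restrict_mem hV.measurableSet).and
    (ae_mono (Measure.restrict_mono hVs le_rfl) hp)).exists

section PartialDeriv

variable {𝕜 F : Type*} [NontriviallyNormedField 𝕜] [NormedAddCommGroup F] [NormedSpace 𝕜 F]
  {Z : 𝕜 → 𝕜 → F} {n : WithTop ℕ∞}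

theorem ContDiff.uncurry_deriv_snd (hZ : ContDiff 𝕜 (n + 1) (uncurry Z)) :
    ContDiff 𝕜 n (uncurry fun x y => deriv (Z x) y) := by
  have hd : Differentiable 𝕜 (uncurry Z) := hZ.differentiable (by simp)
  have : (uncurry fun x y => deriv (Z x) y)
      = fun q => fderiv 𝕜 (uncurry Z) q (0, 1) := by
    funext ⟨x, y⟩
    exact ((hd (x, y)).hasFDerivAt.comp_hasDerivAt y
      ((hasDerivAt_const y x).prodMk (hasDerivAt_id y))).deriv
  rw [this]
  exact (hZ.fderiv_right le_rfl).clm_apply contDiff_const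

theorem ContDiff.uncurry_deriv_fst (hZ : ContDiff 𝕜 (n + 1) (uncurry Z)) :
    ContDiff 𝕜 n (uncurry fun x y => deriv (fun x => Z x y) x) := by
  have hd : Differentiable 𝕜 (uncurry Z) := hZ.differentiable (by simp)
  have : (uncurry fun x y => deriv (fun x => Z x y) x)
      = fun q => fderiv 𝕜 (uncurry Z) q (1, 0) := by
    funext ⟨x, y⟩
    exact ((hd (x, y)).hasFDerivAt.comp_hasDerivAt x
      ((hasDerivAt_id x).prodMk (hasDerivAt_const x y))).deriv
  rw [this]
  exact (hZ.fderiv_right le_rfl).clm_apply contDiff_const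

end PartialDeriv

def addParaboloid (Z : ℝ → ℝ → ℝ) (ε a b : ℝ) (q : ℝ × ℝ) : ℝ :=
  Z q.1 q.2 + ε * ((q.1 - a) ^ 2 + (q.2 - b) ^ 2)

section Paraboloid

variable {Z : ℝ → ℝ → ℝ} {ε a b : ℝ}

theorem hasDerivAt_addParaboloid_fst (hZ : Differentiable ℝ (uncurry Z)) (x y : ℝ) :
    HasDerivAt (fun x => addParaboloid Z ε a b (x, y))
      (deriv (fun x => Z x y) x + ε * (2 * (x - a))) x := by
  have hZx : HasDerivAt (fun x => Z x y) (deriv (fun x => Z x y) x) x :=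
    ((hZ.comp (differentiable_id.prodMk (differentiable_const y))) x).hasDerivAt
  exact (hZx.add (HasDerivAt.const_mul ε
    ((((hasDerivAt_id x).sub_const a).pow 2).add_const ((y - b) ^ 2)))).congr_deriv (by simp)

theorem hasDerivAt_addParaboloid_snd (hZ : Differentiable ℝ (uncurry Z)) (x y : ℝ) :
    HasDerivAt (fun y => addParaboloid Z ε a b (x, y))
      (deriv (Z x) y + ε * (2 * (y - b))) y := by
  have hZy : HasDerivAt (Z x) (deriv (Z x) y) y :=
    ((hZ.comp ((differentiable_const x).prodMk differentiable_id)) y).hasDerivAt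
  exact (hZy.add (HasDerivAt.const_mul ε
    ((((hasDerivAt_id y).sub_const b).pow 2).const_add ((x - a) ^ 2)))).congr_deriv (by simp)

theorem IsMaxOn.deriv_fst_pos (hZ : Differentiable ℝ (uncurry Z)) {l u y : ℝ} {t : Set ℝ}
    (h : IsMaxOn (addParaboloid Z ε a b) (Icc l u ×ˢ t) (u, y)) (hlu : l < u) (hy : y ∈ t)
    (hε : 0 < ε) (hua : u < a) : 0 < deriv (fun x => Z x y) u := by
  have hslice : IsMaxOn (fun x => addParaboloid Z ε a b (x, y)) (Icc l u) u :=
    isMaxOn_iff.2 fun x hx => isMaxOn_iff.1 h _ (mk_mem_prod hx hy)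
  have := hslice.hasDerivAt_mul_sub_nonpos (convex_Icc l u) (right_mem_Icc.2 hlu.le)
    (left_mem_Icc.2 hlu.le) (hasDerivAt_addParaboloid_fst hZ u y)
  nlinarith [mul_pos hε (sub_pos.2 hua)]

theorem IsMaxOn.deriv_snd_neg (hZ : Differentiable ℝ (uncurry Z)) {l u x : ℝ} {s : Set ℝ}
    (h : IsMaxOn (addParaboloid Z ε a b) (s ×ˢ Icc l u) (x, l)) (hlu : l < u) (hx : x ∈ s)
    (hε : 0 < ε) (hbl : b < l) : deriv (Z x) l < 0 := by
  have hslice : IsMaxOn (fun y => addParaboloid Z ε a b (x, y)) (Icc l u) l :=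
    isMaxOn_iff.2 fun y hy => isMaxOn_iff.1 h _ (mk_mem_prod hx hy)
  have := hslice.hasDerivAt_mul_sub_nonpos (convex_Icc l u) (left_mem_Icc.2 hlu.le)
    (right_mem_Icc.2 hlu.le) (hasDerivAt_addParaboloid_snd hZ x l)
  nlinarith [mul_pos hε (sub_pos.2 hbl)]

theorem IsLocalMax.deriv_deriv_fst_le (hZ : ContDiff ℝ 2 (uncurry Z)) {x y : ℝ}
    (h : IsLocalMax (addParaboloid Z ε a b) (x, y)) :
    deriv (fun x => deriv (fun x => Z x y) x) x ≤ -(2 * ε) := by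
  have hZx : Differentiable ℝ (uncurry fun x y => deriv (fun x => Z x y) x) :=
    (hZ.uncurry_deriv_fst (n := 1)).differentiable (by simp)
  have hslice : IsLocalMax (fun x => addParaboloid Z ε a b (x, y)) x :=
    h.comp_continuous (g := fun x => (x, y)) (by fun_prop)
  have hderiv : deriv (fun x => addParaboloid Z ε a b (x, y))
      = fun x => deriv (fun x => Z x y) x + ε * (2 * (x - a)) :=
    funext fun x => (hasDerivAt_addParaboloid_fst (hZ.differentiable (by simp)) x y).deriv
  have hderiv2 : HasDerivAt (fun x => deriv (fun x => Z x y) x + ε * (2 * (x - a)))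
      (deriv (fun x => deriv (fun x => Z x y) x) x + 2 * ε) x := by
    have hZxx : HasDerivAt (fun x => deriv (fun x => Z x y) x)
        (deriv (fun x => deriv (fun x => Z x y) x) x) x :=
      ((hZx.comp (differentiable_id.prodMk (differentiable_const y))) x).hasDerivAt
    exact (hZxx.add ((((hasDerivAt_id x).sub_const a).const_mul 2).const_mul ε)).congr_deriv
      (by ring)
  have := hslice.deriv_deriv_nonpos
    (hasDerivAt_addParaboloid_fst (hZ.differentiable (by simp)) x y).continuousAt
  rw [hderiv, hderiv2.deriv] at this
  linarith

theorem IsLocalMax.deriv_deriv_snd_le (hZ : ContDiff ℝ 2 (uncurry Z)) {x y : ℝ}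
    (h : IsLocalMax (addParaboloid Z ε a b) (x, y)) : deriv (deriv (Z x)) y ≤ -(2 * ε) := by
  have hZy : Differentiable ℝ (uncurry fun x y => deriv (Z x) y) :=
    (hZ.uncurry_deriv_snd (n := 1)).differentiable (by simp)
  have hslice : IsLocalMax (fun y => addParaboloid Z ε a b (x, y)) y :=
    h.comp_continuous (g := fun y => (x, y)) (by fun_prop)
  have hderiv : deriv (fun y => addParaboloid Z ε a b (x, y))
      = fun y => deriv (Z x) y + ε * (2 * (y - b)) :=
    funext fun y => (hasDerivAt_addParaboloid_snd (hZ.differentiable (by simp)) x y).deriv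
  have hderiv2 : HasDerivAt (fun y => deriv (Z x) y + ε * (2 * (y - b)))
      (deriv (deriv (Z x)) y + 2 * ε) y := by
    have hZyy : HasDerivAt (deriv (Z x)) (deriv (deriv (Z x)) y) y :=
      ((hZy.comp ((differentiable_const x).prodMk differentiable_id)) y).hasDerivAt
    exact (hZyy.add ((((hasDerivAt_id y).sub_const b).const_mul 2).const_mul ε)).congr_deriv
      (by ring)
  have := hslice.deriv_deriv_nonpos
    (hasDerivAt_addParaboloid_snd (hZ.differentiable (by simp)) x y).continuousAt
  rw [hderiv, hderiv2.deriv] at this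
  linarith

theorem not_isLocalMax_addParaboloid_of_ae_subsolution
    (hZ : ContDiff ℝ 2 (uncurry Z)) {U : Set (ℝ × ℝ)} (hU : IsOpen U) {A B : ℝ × ℝ → ℝ}
    (hA : ∀ q ∈ U, 0 < A q) (hB : ∀ q ∈ U, 0 ≤ B q)
    (hsub : ∀ᵐ q ∂volume.restrict U,
      -A q * deriv (deriv (Z q.1)) q.2
        - B q * deriv (fun r => deriv (fun r' => Z r' q.2) r) q.1 ≤ 0)
    {x y : ℝ} (hε : 0 < ε) (hxy : (x, y) ∈ U) :
    ¬ IsLocalMax (addParaboloid Z ε a b) (x, y) := by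
  intro hmax
  have hZzz : Continuous (uncurry fun x y => deriv (deriv (Z x)) y) :=
    ((hZ.uncurry_deriv_snd (n := 1)).uncurry_deriv_snd (n := 0)).continuous
  have hZrr : Continuous (uncurry fun x y => deriv (fun x => deriv (fun x => Z x y) x) x) :=
    ((hZ.uncurry_deriv_fst (n := 1)).uncurry_deriv_fst (n := 0)).continuous
  have hev : ∀ᶠ q in 𝓝 (x, y), q ∈ U ∧ deriv (deriv (Z q.1)) q.2 < 0 ∧
      deriv (fun r => deriv (fun r' => Z r' q.2) r) q.1 < 0 :=
    Filter.Eventually.and (hU.mem_nhds hxy) <|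
      (hZzz.continuousAt.eventually_lt continuousAt_const
        ((hmax.deriv_deriv_snd_le hZ).trans_lt (by linarith))).and
      (hZrr.continuousAt.eventually_lt continuousAt_const
        ((hmax.deriv_deriv_fst_le hZ).trans_lt (by linarith)))
  obtain ⟨V, hV, hVo, hxyV⟩ := eventually_nhds_iff.1 hev
  obtain ⟨q, hqV, hq⟩ := exists_mem_of_ae_restrict hsub hVo ⟨_, hxyV⟩ fun q hq => (hV q hq).1
  obtain ⟨hqU, hzz, hrr⟩ := hV q hqV
  nlinarith [mul_pos (hA q hqU) (neg_pos.2 hzz), mul_nonneg (hB q hqU) (neg_nonneg.2 hrr.le)]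

theorem exists_isLocalMax_addParaboloid (hZ : Differentiable ℝ (uncurry Z))
    {g z₁ r₀ z₀ : ℝ} (hg : 0 < g) (hbc0 : ∀ z : ℝ, 0 ≤ z → Z 0 z = 0)
    (hbcg : ∀ z : ℝ, 0 ≤ z → deriv (fun r => Z r z) g = 0)
    (hbcz : ∀ r ∈ Ioo (0 : ℝ) g, 0 ≤ deriv (Z r) 0)
    (hr₀ : r₀ ∈ Icc 0 g) (hz₀ : z₀ ∈ Icc 0 z₁) (hpos : 0 < Z r₀ z₀)
    (htop : ∀ r ∈ Icc 0 g, Z r z₁ ≤ Z r₀ z₀ / 2) :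
    ∃ ε > 0, ∃ q ∈ Ioo 0 g ×ˢ Ioi 0, IsLocalMax (addParaboloid Z ε (2 * g) (-1)) q := by
  set M := Z r₀ z₀
  set C := 4 * g ^ 2 + (z₁ + 1) ^ 2
  set ε := M / (4 * C)
  have hC : C ≠ 0 := by positivity
  have hε : 0 < ε := by positivity
  have hεC : ε * C = M / 4 := by
    simp only [ε]; field_simp
  have hW : Continuous (addParaboloid Z ε (2 * g) (-1)) := hZ.continuous.add (by fun_prop)
  obtain ⟨⟨x, y⟩, hK, hmax⟩ := (isCompact_Icc.prod isCompact_Icc).exists_isMaxOn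
    ⟨(r₀, z₀), hr₀, hz₀⟩ hW.continuousOn
  obtain ⟨⟨hx0, hxg⟩, hy0, hyz₁⟩ := hK
  have hWge : M ≤ addParaboloid Z ε (2 * g) (-1) (x, y) :=
    (le_add_of_nonneg_right (by positivity : 0 ≤ ε * ((r₀ - 2 * g) ^ 2 + (z₀ - -1) ^ 2))).trans
      (isMaxOn_iff.1 hmax (r₀, z₀) ⟨hr₀, hz₀⟩)
  have hWle : addParaboloid Z ε (2 * g) (-1) (x, y) ≤ Z x y + M / 4 := by
    have : (x - 2 * g) ^ 2 + (y - -1) ^ 2 ≤ C := by nlinarith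
    unfold addParaboloid
    nlinarith
  have hx : 0 < x := hx0.lt_of_ne fun h => by
    subst h; linarith [hbc0 y hy0]
  have hy : y < z₁ := hyz₁.lt_of_ne fun h => by
    subst h; linarith [htop x ⟨hx0, hxg⟩]
  have hxg' : x < g := hxg.lt_of_ne fun h => by
    subst h
    exact (hmax.deriv_fst_pos hZ hx ⟨hy0, hyz₁⟩ hε (by linarith)).ne' (hbcg y hy0)
  have hy' : 0 < y := hy0.lt_of_ne fun h => by
    subst h
    exact (hmax.deriv_snd_neg hZ hy ⟨hx0, hxg⟩ hε (by norm_num)).not_ge (hbcz x ⟨hx, hxg'⟩)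
  exact ⟨ε, hε, (x, y), ⟨⟨hx, hxg'⟩, hy'⟩,
    hmax.isLocalMax (prod_mem_nhds (Icc_mem_nhds hx hxg') (Icc_mem_nhds hy' hy))⟩

end Paraboloid

theorem strip_energy_subsolution_nonpos_general (g s : ℝ) (hg : 0 < g ∧ g < 1)
    (pfun : ℝ → ℝ)
    (hpfun : ∀ r lam : ℝ, gaussPhi lam = r →
      pfun r = (1 / (2 * π)) * Real.exp (-(lam ^ 2)))
    (Z : ℝ → ℝ → ℝ) (hZ : ContDiff ℝ 2 (Function.uncurry Z))
    (hsub : ∀ᵐ q ∂(volume.restrict ((Set.Ioo (0 : ℝ) g) ×ˢ (Set.Ioi (0 : ℝ)))),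
      -(q.2 ^ ((2 : ℝ) - 1 / s)) * deriv (deriv (Z q.1)) q.2
        - pfun q.1 * deriv (fun r => deriv (fun r' => Z r' q.2) r) q.1 ≤ 0)
    (hbc0 : ∀ z : ℝ, 0 ≤ z → Z 0 z = 0)
    (hbcg : ∀ z : ℝ, 0 ≤ z → deriv (fun r => Z r z) g = 0)
    (hbcz : ∀ r ∈ Set.Ioo (0 : ℝ) g, 0 ≤ deriv (Z r) 0)
    (hdecay : ∀ ε > (0 : ℝ), ∃ z₀ : ℝ, ∀ z ≥ z₀, ∀ r ∈ Set.Icc (0 : ℝ) g, |Z r z| ≤ ε) :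
    ∀ r ∈ Set.Icc (0 : ℝ) g, ∀ z : ℝ, 0 ≤ z → Z r z ≤ 0 := by
  have hp : ∀ q ∈ Ioo 0 g ×ˢ Ioi (0 : ℝ), 0 ≤ pfun q.1 := fun q hq => by
    obtain ⟨lam, hlam⟩ := Ioo_subset_range_gaussPhi ⟨hq.1.1, hq.1.2.trans hg.2⟩
    rw [hpfun _ lam hlam]
    positivity
  intro r₀ hr₀ z₀ hz₀
  by_contra! hpos
  obtain ⟨z₁, hz₁⟩ := hdecay (Z r₀ z₀ / 2) (by linarith)
  have htop : ∀ r ∈ Icc 0 g, Z r (max z₁ z₀) ≤ Z r₀ z₀ / 2 := fun r hr =>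
    (abs_le.1 (hz₁ _ (le_max_left _ _) r hr)).2
  obtain ⟨ε, hε, ⟨x, y⟩, hxy, hmax⟩ := exists_isLocalMax_addParaboloid
    (hZ.differentiable (by simp)) hg.1 hbc0 hbcg hbcz hr₀ ⟨hz₀, le_max_right _ _⟩ hpos htop
  exact not_isLocalMax_addParaboloid_of_ae_subsolution hZ (isOpen_Ioo.prod isOpen_Ioi)
    (fun q hq => rpow_pos_of_pos hq.2 _) hp hsub hε hxy hmax

/-- Uniqueness via an energy argument on the strip: if `Z(r,z)` is a (smooth enough)
subsolution of `-z^{2-1/s} Z_{zz} - p(r) Z_{rr} ≤ 0` on `(0,g)×(0,∞)`, where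
`p(r) = (1/(2π)) exp(-[Φ⁻¹(r)]²)`, with `Z(0,z) = 0`, `Z_r(g,z) = 0`, `Z_z(r,0) ≥ 0`,
and `Z(r,z) → 0` as `z → ∞` uniformly in `r`, then `Z ≤ 0` on `[0,g]×[0,∞)`. -/
theorem strip_energy_subsolution_nonpos (g s : ℝ) (hg : 0 < g ∧ g < 1)
    (hs : 0 < s ∧ s < 1)
    (pfun : ℝ → ℝ)
    (hpfun : ∀ r lam : ℝ, gaussPhi lam = r →
      pfun r = (1 / (2 * π)) * Real.exp (-(lam ^ 2)))
    (Z : ℝ → ℝ → ℝ) (hZ : ContDiff ℝ 2 (Function.uncurry Z))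
    (hsub : ∀ᵐ q ∂(volume.restrict ((Set.Ioo (0 : ℝ) g) ×ˢ (Set.Ioi (0 : ℝ)))),
      -(q.2 ^ ((2 : ℝ) - 1 / s)) * deriv (deriv (Z q.1)) q.2
        - pfun q.1 * deriv (fun r => deriv (fun r' => Z r' q.2) r) q.1 ≤ 0)
    (hbc0 : ∀ z : ℝ, 0 ≤ z → Z 0 z = 0)
    (hbcg : ∀ z : ℝ, 0 ≤ z → deriv (fun r => Z r z) g = 0)
    (hbcz : ∀ r ∈ Set.Ioo (0 : ℝ) g, 0 ≤ deriv (Z r) 0)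
    (hdecay : ∀ ε > (0 : ℝ), ∃ z₀ : ℝ, ∀ z ≥ z₀, ∀ r ∈ Set.Icc (0 : ℝ) g, |Z r z| ≤ ε) :
    ∀ r ∈ Set.Icc (0 : ℝ) g, ∀ z : ℝ, 0 ≤ z → Z r z ≤ 0 :=
  strip_energy_subsolution_nonpos_general g s hg pfun hpfun Z hZ hsub hbc0 hbcg hbcz hdecay
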